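/- Let X be a two-dimensional strictly convex real Banach space. A bounded linear operator T : X → X is left symmetric (i.e., for all A ∈ B(X), T ⊥_B A implies A ⊥_B T, where ⊥_B denotes Birkhoff-James orthogonality in the operator norm) if and only if T = 0. -/

import Mathlib

/-!
Suppose `T ≠ 0` is left symmetric and let `x` be a unit vector with `‖T x‖ = ‖T‖`, so that
`T ⊥ A` whenever `T x ⊥ A x`. By strict convexity a norm-one functional `φ` with `φ w = 1` peaks
only at `±w`, hence `φ ⊗ z ⊥ B` forces `z ⊥ B w`. Applied to `h ⊗ T u`, with `h` a norm-one
functional peaking at `u` and vanishing at `x`, this gives `T u = 0`, so `T = f ⊗ q` with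
`q = T x`. Pick a unit `y` with `q ⊥ y`. If `y ⊥ q` fails, `ψ ⊗ y` (with `ψ` a support functional
at `x`) breaks the symmetry. Otherwise take `A = (f + h) ⊗ y + ε h ⊗ q`: since `‖f + h‖ > 1`,
`A` comes close to its norm only where `f` and `h` are both clearly positive (up to sign), and
there subtracting a small multiple of `T` shortens the `q`-component of `A v`, which strictly
decreases `‖A v‖` because `y ⊥ q` in a strictly convex space.
-/

def OpBJOrth {X : Type*} [NormedAddCommGroup X] [NormedSpace ℝ X]
    (T A : X →L[ℝ] X) : Prop :=
  ∀ lam : ℝ, ‖T + lam • A‖ ≥ ‖T‖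

open Module

section BirkhoffJames

variable {E : Type*} [NormedAddCommGroup E] [NormedSpace ℝ E]

def BJOrth (x y : E) : Prop :=
  ∀ t : ℝ, ‖x‖ ≤ ‖x + t • y‖

theorem opBJOrth_iff_bjOrth {X : Type*} [NormedAddCommGroup X] [NormedSpace ℝ X]
    {T A : X →L[ℝ] X} : OpBJOrth T A ↔ BJOrth T A :=
  Iff.rfl

theorem bjOrth_zero_right (x : E) : BJOrth x 0 := fun t => by simp

theorem BJOrth.smul_left {x y : E} (h : BJOrth x y) (s : ℝ) : BJOrth (s • x) y := by
  intro t
  rcases eq_or_ne s 0 with rfl | hs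
  · simp
  calc ‖s • x‖ = |s| * ‖x‖ := by rw [norm_smul, Real.norm_eq_abs]
    _ ≤ |s| * ‖x + (t / s) • y‖ := by gcongr; exact h _
    _ = ‖s • x + t • y‖ := by
      rw [← Real.norm_eq_abs, ← norm_smul, smul_add, smul_smul, mul_div_cancel₀ _ hs]

theorem bjOrth_of_apply_eq_norm {φ : E →L[ℝ] ℝ} (hφ : ‖φ‖ ≤ 1) {x y : E} (hx : φ x = ‖x‖)
    (hy : φ y = 0) : BJOrth x y := fun t =>
  calc ‖x‖ = φ (x + t • y) := by simp [hx, hy]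
    _ ≤ ‖φ (x + t • y)‖ := Real.le_norm_self _
    _ ≤ ‖φ‖ * ‖x + t • y‖ := φ.le_opNorm _
    _ ≤ ‖x + t • y‖ := mul_le_of_le_one_left (norm_nonneg _) hφ

variable [StrictConvexSpace ℝ E]

theorem BJOrth.norm_lt_norm_add_smul {x y : E} (h : BJOrth x y) (hy : y ≠ 0) {c : ℝ}
    (hc : c ≠ 0) : ‖x‖ < ‖x + c • y‖ := by
  by_contra! hle
  have hne : x ≠ x + c • y := by simpa [eq_comm, hc] using hy
  have hmid := norm_combo_lt_of_ne le_rfl hle hne one_half_pos one_half_pos (add_halves 1)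
  have : (1 / 2 : ℝ) • x + (1 / 2 : ℝ) • (x + c • y) = x + (c / 2) • y := by module
  rw [this] at hmid
  exact (h _).not_gt hmid

theorem BJOrth.strictMonoOn_norm_add_smul {x y : E} (h : BJOrth x y) (hy : y ≠ 0) :
    StrictMonoOn (fun c : ℝ => ‖x + c • y‖) (Set.Ici 0) := by
  intro c₁ hc₁ c₂ _ hc
  have hc₂ : 0 < c₂ := lt_of_le_of_lt hc₁ hc
  set θ := c₁ / c₂
  have hθ : θ < 1 := (div_lt_one hc₂).2 hc
  have hsplit : x + c₁ • y = (1 - θ) • x + θ • (x + c₂ • y) := by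
    rw [← div_mul_cancel₀ c₁ hc₂.ne']; module
  calc ‖x + c₁ • y‖ ≤ (1 - θ) * ‖x‖ + θ * ‖x + c₂ • y‖ := by
        rw [hsplit]
        refine (norm_add_le _ _).trans_eq ?_
        rw [norm_smul, norm_smul, Real.norm_of_nonneg (by linarith),
          Real.norm_of_nonneg (div_nonneg hc₁ hc₂.le)]
    _ < ‖x + c₂ • y‖ := by
        nlinarith [h.norm_lt_norm_add_smul hy hc₂.ne']

theorem eq_of_apply_eq_one {φ : E →L[ℝ] ℝ} (hφ : ‖φ‖ ≤ 1) {v w : E} (hv : ‖v‖ ≤ 1)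
    (hw : ‖w‖ ≤ 1) (hφv : φ v = 1) (hφw : φ w = 1) : v = w := by
  by_contra hne
  have hmid := norm_combo_lt_of_ne hv hw hne one_half_pos one_half_pos (add_halves 1)
  have : φ ((1 / 2 : ℝ) • v + (1 / 2 : ℝ) • w) = 1 := by simp [hφv, hφw]; norm_num
  have := (Real.le_norm_self _).trans (φ.le_opNorm ((1 / 2 : ℝ) • v + (1 / 2 : ℝ) • w))
  nlinarith [norm_nonneg φ, norm_nonneg ((1 / 2 : ℝ) • v + (1 / 2 : ℝ) • w)]

-- At a unit vector `v` with `f v = a`, `h v = b`, these are the two alternatives of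
-- `not_bjOrth_of_forall_norm_eq_one` for `A = (f + h) ⊗ y + ε h ⊗ q`, `B = f ⊗ q`, `t = -εκ`.
theorem BJOrth.norm_add_smul_lt_or {y q : E} (hy : ‖y‖ = 1) (hq : q ≠ 0) (hyq : BJOrth y q)
    {κ ε : ℝ} (hκ : 0 < κ) (hε : 0 < ε) (hεq : ε * ‖q‖ = κ / 2) {a b : ℝ} (ha : |a| ≤ 1)
    (hb : |b| ≤ 1) :
    ‖(a + b) • y + (ε * b) • q‖ < 1 + 2 * κ ∨
      ‖(a + b) • y + (ε * (b - κ * a)) • q‖ < ‖(a + b) • y + (ε * b) • q‖ := by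
  have hshrink : ∀ a b : ℝ, 0 < a → κ * a ≤ b →
      ‖(a + b) • y + (ε * (b - κ * a)) • q‖ < ‖(a + b) • y + (ε * b) • q‖ := by
    intro a b ha hab
    have hc : 0 ≤ ε * (b - κ * a) := mul_nonneg hε.le (by linarith)
    have hlt : ε * (b - κ * a) < ε * b := by nlinarith [mul_pos hε (mul_pos hκ ha)]
    exact (hyq.smul_left (a + b)).strictMonoOn_norm_add_smul hq hc (hc.trans hlt.le) hlt
  obtain ⟨ha₁, ha₂⟩ := abs_le.1 ha
  obtain ⟨hb₁, hb₂⟩ := abs_le.1 hb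
  by_cases hpos : 0 < a ∧ κ * a ≤ b
  · exact Or.inr (hshrink a b hpos.1 hpos.2)
  by_cases hneg : 0 < -a ∧ κ * -a ≤ -b
  · right
    have := hshrink (-a) (-b) hneg.1 hneg.2
    rwa [show (-a + -b) • y + (ε * (-b - κ * -a)) • q = -((a + b) • y + (ε * (b - κ * a)) • q)
        by module, show (-a + -b) • y + (ε * -b) • q = -((a + b) • y + (ε * b) • q) by module,
      norm_neg, norm_neg] at this
  left
  have hab : |a + b| ≤ 1 + κ := by
    refine abs_le.2 ⟨?_, ?_⟩
    · rcases not_and_or.1 hneg with h | h <;> nlinarith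
    · rcases not_and_or.1 hpos with h | h <;> nlinarith
  calc ‖(a + b) • y + (ε * b) • q‖ ≤ |a + b| * ‖y‖ + ε * |b| * ‖q‖ := by
        refine (norm_add_le _ _).trans_eq ?_
        rw [norm_smul, norm_smul, Real.norm_eq_abs, Real.norm_eq_abs, abs_mul, abs_of_pos hε]
    _ ≤ (1 + κ) * 1 + κ / 2 * 1 := by
        rw [hy, mul_right_comm, hεq]
        gcongr
    _ < 1 + 2 * κ := by linarith

end BirkhoffJames

section Operators

variable {X F : Type*} [NormedAddCommGroup X] [NormedSpace ℝ X] [NormedAddCommGroup F]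
  [NormedSpace ℝ F]

theorem bjOrth_of_bjOrth_apply {T A : X →L[ℝ] F} {x : X} (hx : ‖x‖ ≤ 1) (hTx : ‖T x‖ = ‖T‖)
    (h : BJOrth (T x) (A x)) : BJOrth T A := fun t =>
  calc ‖T‖ = ‖T x‖ := hTx.symm
    _ ≤ ‖(T + t • A) x‖ := h t
    _ ≤ ‖T + t • A‖ := by simpa using (T + t • A).le_opNorm_of_le hx

theorem BJOrth.norm_le_opNorm_smulRight_add {y q : F} (hy : ‖y‖ = 1) (hyq : BJOrth y q)
    (g k : X →L[ℝ] ℝ) : ‖g‖ ≤ ‖g.smulRight y + k.smulRight q‖ := by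
  refine g.opNorm_le_bound (norm_nonneg _) fun v => ?_
  calc ‖g v‖ = ‖g v • y‖ := by rw [norm_smul, hy, mul_one]
    _ ≤ ‖(g.smulRight y + k.smulRight q) v‖ := hyq.smul_left _ _
    _ ≤ ‖g.smulRight y + k.smulRight q‖ * ‖v‖ := ContinuousLinearMap.le_opNorm _ v

variable [FiniteDimensional ℝ X]

theorem ContinuousLinearMap.exists_norm_apply_eq_opNorm [Nontrivial X] (A : X →L[ℝ] F) :
    ∃ v : X, ‖v‖ = 1 ∧ ‖A v‖ = ‖A‖ := by
  obtain ⟨v, hv, hmax⟩ := (isCompact_sphere (0 : X) 1).exists_isMaxOn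
    (NormedSpace.sphere_nonempty.2 zero_le_one) (continuous_norm.comp A.continuous).continuousOn
  rw [mem_sphere_zero_iff_norm] at hv
  refine ⟨v, hv, le_antisymm (by simpa [hv] using A.le_opNorm v) ?_⟩
  exact A.opNorm_le_of_unit_norm (norm_nonneg _) fun w hw =>
    hmax (mem_sphere_zero_iff_norm.2 hw)

theorem ContinuousLinearMap.exists_apply_eq_opNorm [Nontrivial X] (φ : X →L[ℝ] ℝ) :
    ∃ v : X, ‖v‖ = 1 ∧ φ v = ‖φ‖ := by
  obtain ⟨v, hv, hφv⟩ := φ.exists_norm_apply_eq_opNorm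
  rcases le_total 0 (φ v) with hpos | hneg
  · exact ⟨v, hv, by rwa [Real.norm_of_nonneg hpos] at hφv⟩
  · exact ⟨-v, by rwa [norm_neg], by rwa [Real.norm_of_nonpos hneg, ← map_neg] at hφv⟩

theorem exists_pos_forall_norm_eq_one_le_neg_or [Nontrivial X] {a b : X → ℝ}
    (ha : Continuous a) (hb : Continuous b) (h : ∀ v : X, ‖v‖ = 1 → a v < 0 ∨ b v < 0) :
    ∃ δ > 0, ∀ v : X, ‖v‖ = 1 → a v ≤ -δ ∨ b v ≤ -δ := by
  obtain ⟨v₀, hv₀, hmax⟩ := (isCompact_sphere (0 : X) 1).exists_isMaxOn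
    (NormedSpace.sphere_nonempty.2 zero_le_one) (ha.min hb).continuousOn
  refine ⟨-min (a v₀) (b v₀), neg_pos.2 ?_, fun v hv => ?_⟩
  · rcases h v₀ (mem_sphere_zero_iff_norm.1 hv₀) with h₀ | h₀
    · exact min_lt_of_left_lt h₀
    · exact min_lt_of_right_lt h₀
  · rw [neg_neg, ← min_le_iff]
    exact isMaxOn_iff.1 hmax v (mem_sphere_zero_iff_norm.2 hv)

theorem not_bjOrth_of_forall_norm_eq_one [Nontrivial X] {A B : X →L[ℝ] F} (t : ℝ)
    (h : ∀ v : X, ‖v‖ = 1 → ‖A v‖ < ‖A‖ ∨ ‖A v + t • B v‖ < ‖A‖) : ¬ BJOrth A B := by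
  obtain ⟨δ, hδ, hgap⟩ := exists_pos_forall_norm_eq_one_le_neg_or
    (a := fun v => ‖A v‖ - ‖A‖) (b := fun v => ‖A v + t • B v‖ - ‖A‖) (by fun_prop)
    (by fun_prop) fun v hv => by simpa only [sub_neg] using h v hv
  intro horth
  set M := |t| * ‖B‖
  -- with this `θ` both alternatives of `hgap` yield the same bound `‖A‖ - θ * δ`
  set θ := δ / (δ + M)
  have hM : 0 ≤ M := by positivity
  have hθ₀ : 0 < θ := by positivity
  have hθ₁ : θ ≤ 1 := (div_le_one (by positivity)).2 (by linarith)
  have hθM : θ * M = δ - θ * δ := by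
    have : θ * (δ + M) = δ := div_mul_cancel₀ _ (by positivity)
    linarith
  have hbound : ∀ v : X, ‖v‖ = 1 → ‖(A + (θ * t) • B) v‖ ≤ ‖A‖ - θ * δ := by
    intro v hv
    have hAv : ‖A v‖ ≤ ‖A‖ := by simpa [hv] using A.le_opNorm v
    have hBv : ‖B v‖ ≤ ‖B‖ := by simpa [hv] using B.le_opNorm v
    rcases hgap v hv with hA | hAB
    · calc ‖(A + (θ * t) • B) v‖ ≤ ‖A v‖ + θ * M := by
            refine (norm_add_le (A v) ((θ * t) • B v)).trans ?_
            rw [norm_smul, Real.norm_eq_abs, abs_mul, abs_of_pos hθ₀, mul_assoc]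
            gcongr
            exact mul_le_mul_of_nonneg_left hBv (abs_nonneg t)
        _ ≤ ‖A‖ - θ * δ := by linarith
    · have hsplit : (A + (θ * t) • B) v = (1 - θ) • A v + θ • (A v + t • B v) := by
        change A v + (θ * t) • B v = _; module
      calc ‖(A + (θ * t) • B) v‖ ≤ (1 - θ) * ‖A v‖ + θ * ‖A v + t • B v‖ := by
            rw [hsplit]
            refine (norm_add_le _ _).trans_eq ?_
            rw [norm_smul, norm_smul, Real.norm_of_nonneg (by linarith),
              Real.norm_of_nonneg hθ₀.le]
        _ ≤ (1 - θ) * ‖A‖ + θ * (‖A‖ - δ) := by gcongr; linarith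
        _ = ‖A‖ - θ * δ := by ring
  obtain ⟨v, hv⟩ := NormedSpace.sphere_nonempty (x := (0 : X)).2 zero_le_one
  have hnonneg : 0 ≤ ‖A‖ - θ * δ :=
    (norm_nonneg _).trans (hbound v (mem_sphere_zero_iff_norm.1 hv))
  have := (A + (θ * t) • B).opNorm_le_of_unit_norm hnonneg hbound
  linarith [horth (θ * t), mul_pos hθ₀ hδ]

variable [StrictConvexSpace ℝ X]

theorem not_bjOrth_smulRight {φ : X →L[ℝ] ℝ} (hφ : ‖φ‖ = 1) {w : X} (hw : ‖w‖ = 1)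
    (hφw : φ w = 1) {z : F} {B : X →L[ℝ] F} {t : ℝ} (hz : ‖z + t • B w‖ < ‖z‖) :
    ¬ BJOrth (φ.smulRight z) B := by
  have : Nontrivial X := nontrivial_of_ne w 0 (by rintro rfl; simp at hw)
  refine not_bjOrth_of_forall_norm_eq_one t fun v hv => ?_
  rw [ContinuousLinearMap.norm_smulRight_apply, hφ, one_mul]
  have hφv : |φ v| ≤ 1 := by simpa [hφ, hv] using φ.le_opNorm v
  rcases hφv.lt_or_eq with hlt | heq
  · left
    rw [ContinuousLinearMap.smulRight_apply, norm_smul, Real.norm_eq_abs]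
    exact mul_lt_of_lt_one_left ((norm_nonneg _).trans_lt hz) hlt
  · right
    rcases abs_eq zero_le_one |>.1 heq with hφv | hφv
    · obtain rfl := eq_of_apply_eq_one hφ.le hv.le hw.le hφv hφw
      simpa [hφv] using hz
    · obtain rfl : -v = w :=
        eq_of_apply_eq_one hφ.le (by rw [norm_neg, hv]) hw.le (by simp [hφv]) hφw
      have : φ.smulRight z v + t • B v = -(z + t • B (-v)) := by
        simp [hφv]; abel
      rwa [this, norm_neg]

theorem apply_eq_zero_of_forall_bjOrth_imp {T : X →L[ℝ] F}
    (hsym : ∀ A : X →L[ℝ] F, BJOrth T A → BJOrth A T) {x u : X} (hx : ‖x‖ = 1)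
    (hTx : ‖T x‖ = ‖T‖) {h : X →L[ℝ] ℝ} (hh : ‖h‖ = 1) (hu : ‖u‖ = 1) (hhu : h u = 1)
    (hhx : h x = 0) : T u = 0 := by
  by_contra hTu
  refine not_bjOrth_smulRight hh hu hhu (z := T u) (t := -1)
    (by simpa using norm_pos_iff.2 hTu) (hsym _ (bjOrth_of_bjOrth_apply hx.le hTx ?_))
  simpa [hhx] using bjOrth_zero_right (T x)

theorem exists_apply_eq_not_bjOrth {B : X →L[ℝ] F} {x : X} (hx : ‖x‖ = 1) {y : F}
    (hy : ¬ BJOrth y (B x)) : ∃ A : X →L[ℝ] F, A x = y ∧ ¬ BJOrth A B := by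
  obtain ⟨t, ht⟩ : ∃ t : ℝ, ‖y + t • B x‖ < ‖y‖ := by simpa [BJOrth] using hy
  obtain ⟨ψ, hψ, hψx⟩ := exists_dual_vector ℝ x (by simp [hx])
  exact ⟨ψ.smulRight y, by simp [hψx, hx],
    not_bjOrth_smulRight hψ hx (by simpa [hx] using hψx) ht⟩

end Operators

section Coordinates

variable {X : Type*} [NormedAddCommGroup X] [NormedSpace ℝ X] [FiniteDimensional ℝ X]

theorem exists_norm_eq_one_bjOrth (hdim : 1 < finrank ℝ X) (q : X) :
    ∃ y : X, ‖y‖ = 1 ∧ BJOrth q y := by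
  have : Nontrivial X := Module.nontrivial_of_finrank_pos (R := ℝ) (by omega)
  obtain ⟨ψ, hψ, hψq⟩ := exists_dual_vector' ℝ q
  have hker : LinearMap.ker (ψ : X →ₗ[ℝ] ℝ) ≠ ⊥ :=
    LinearMap.ker_ne_bot_of_finrank_lt (by rwa [finrank_self])
  obtain ⟨y, hyψ, hy⟩ := Submodule.exists_mem_ne_zero_of_ne_bot hker
  have hψy : ψ y = 0 := hyψ
  exact ⟨‖y‖⁻¹ • y, norm_smul_inv_norm hy,
    bjOrth_of_apply_eq_norm hψ.le (by simpa using hψq) (by simp [hψy])⟩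

theorem exists_dual_vector_apply_eq_zero (hdim : 1 < finrank ℝ X) (x : X) :
    ∃ (h : X →L[ℝ] ℝ) (u : X), ‖h‖ = 1 ∧ ‖u‖ = 1 ∧ h u = 1 ∧ h x = 0 := by
  have : Nontrivial X := Module.nontrivial_of_finrank_pos (R := ℝ) (by omega)
  have hspan : (ℝ ∙ x) < ⊤ := by
    refine Submodule.lt_top_of_finrank_lt_finrank ?_
    have := finrank_span_le_card (R := ℝ) ({x} : Set X)
    simp at this
    omega
  obtain ⟨φ, hφ, hφx⟩ := (ℝ ∙ x).exists_le_ker_of_lt_top hspan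
  let φ' := LinearMap.toContinuousLinearMap φ
  have hφ'φ : ∀ v, φ' v = φ v := fun _ => rfl
  have hφ' : 0 < ‖φ'‖ :=
    norm_pos_iff.2 fun h => hφ (by ext v; simpa [hφ'φ] using congr($h v))
  obtain ⟨u, hu, hφu⟩ := φ'.exists_apply_eq_opNorm
  refine ⟨‖φ'‖⁻¹ • φ', u, ?_, hu, ?_, ?_⟩
  · rw [norm_smul, norm_inv, norm_norm, inv_mul_cancel₀ hφ'.ne']
  · simp [hφu, hφ'.ne']
  · simp [hφ'φ, show φ x = 0 from hφx (Submodule.mem_span_singleton_self x)]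

theorem exists_eq_smul_add_smul_of_finrank_eq_two (hdim : finrank ℝ X = 2)
    {h : X →L[ℝ] ℝ} {x u : X} (hx : x ≠ 0) (hhx : h x = 0) (hhu : h u = 1) :
    ∃ f : X →L[ℝ] ℝ, f x = 1 ∧ f u = 0 ∧ ∀ v, v = f v • x + h v • u := by
  have hli : LinearIndependent ℝ ![x, u] := by
    refine LinearIndependent.pair_iff.2 fun s t hst => ?_
    have ht : t = 0 := by simpa [hhx, hhu] using congr(h $hst)
    subst ht
    exact ⟨by simpa [hx] using hst, rfl⟩
  set b := basisOfLinearIndependentOfCardEqFinrank hli (by simp [hdim])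
  have hb : ⇑b = ![x, u] := coe_basisOfLinearIndependentOfCardEqFinrank hli _
  have hb₀ : b 0 = x := by simp [hb]
  have hb₁ : b 1 = u := by simp [hb]
  refine ⟨LinearMap.toContinuousLinearMap (b.coord 0), ?_, ?_, fun v => ?_⟩
  · simp [← hb₀]
  · simp [← hb₁]
  · have hv := b.sum_repr v
    rw [Fin.sum_univ_two, hb₀, hb₁] at hv
    have hhv : h v = b.repr v 1 := by simpa [hhx, hhu] using congr(h $hv).symm
    simpa [hhv] using hv.symm

end Coordinates

section RankTwo

variable {X : Type*} [NormedAddCommGroup X] [NormedSpace ℝ X] [FiniteDimensional ℝ X]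
  [StrictConvexSpace ℝ X]

theorem exists_apply_eq_not_bjOrth_smulRight {f h : X →L[ℝ] ℝ} (hf : ‖f‖ ≤ 1) (hh : ‖h‖ ≤ 1)
    {x u : X} (hx : ‖x‖ = 1) (hu : ‖u‖ = 1) (hfx : f x = 1) (hfu : f u = 0) (hhx : h x = 0)
    (hhu : h u = 1) {y q : X} (hy : ‖y‖ = 1) (hq : q ≠ 0) (hyq : BJOrth y q) :
    ∃ A : X →L[ℝ] X, A x = y ∧ ¬ BJOrth A (f.smulRight q) := by
  have : Nontrivial X := nontrivial_of_ne x 0 (by rintro rfl; simp at hx)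
  have hfh : 1 < ‖f + h‖ := by
    by_contra! hfh
    have := eq_of_apply_eq_one hfh hx.le hu.le (by simp [hfx, hhx]) (by simp [hfu, hhu])
    simp [this, hfu] at hfx
  set κ := (‖f + h‖ - 1) / 2
  set ε := κ / (2 * ‖q‖)
  have hκ : 0 < κ := by simp only [κ]; linarith
  have hqpos : 0 < ‖q‖ := norm_pos_iff.2 hq
  have hεq : ε * ‖q‖ = κ / 2 := by simp only [ε]; field_simp
  set A := (f + h).smulRight y + (ε • h).smulRight q
  have hA : ∀ v, A v = (f v + h v) • y + (ε * h v) • q := fun v => by simp [A]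
  have hunit : ∀ φ : X →L[ℝ] ℝ, ‖φ‖ ≤ 1 → ∀ v : X, ‖v‖ = 1 → |φ v| ≤ 1 :=
    fun φ hφ v hv => by simpa [hv] using (φ.le_opNorm v).trans (by simpa [hv] using hφ)
  refine ⟨A, by simp [hA, hfx, hhx],
    not_bjOrth_of_forall_norm_eq_one (-(ε * κ)) fun v hv => ?_⟩
  have hAv : ‖A v‖ ≤ ‖A‖ := by simpa [hv] using A.le_opNorm v
  have hfhA : 1 + 2 * κ ≤ ‖A‖ := by
    have : ‖f + h‖ ≤ ‖A‖ := hyq.norm_le_opNorm_smulRight_add hy _ _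
    simp only [κ]; linarith
  have hTv : A v + (-(ε * κ)) • f.smulRight q v =
      (f v + h v) • y + (ε * (h v - κ * f v)) • q := by
    rw [hA, ContinuousLinearMap.smulRight_apply]; module
  rw [hTv, hA]
  rw [hA] at hAv
  rcases hyq.norm_add_smul_lt_or hy hq hκ (by positivity) hεq (hunit f hf v hv)
    (hunit h hh v hv) with hlt | hlt
  · exact Or.inl (hlt.trans_le hfhA)
  · exact Or.inr (hlt.trans_le hAv)

end RankTwo

theorem left_symmetric_iff_zero_dim_two {X : Type*} [NormedAddCommGroup X]
    [NormedSpace ℝ X] [StrictConvexSpace ℝ X] [FiniteDimensional ℝ X]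
    (hdim : Module.finrank ℝ X = 2) (T : X →L[ℝ] X) :
    (∀ A : X →L[ℝ] X, OpBJOrth T A → OpBJOrth A T) ↔ T = 0 := by
  refine ⟨fun hsym => ?_, fun hT A _ t => by simp [hT]⟩
  simp only [opBJOrth_iff_bjOrth] at hsym
  by_contra hT
  have : Nontrivial X := Module.nontrivial_of_finrank_pos (R := ℝ) (by omega)
  obtain ⟨x, hx, hTx⟩ := T.exists_norm_apply_eq_opNorm
  have hq : T x ≠ 0 := norm_ne_zero_iff.1 (hTx ▸ norm_ne_zero_iff.2 hT)
  obtain ⟨h, u, hh, hu, hhu, hhx⟩ := exists_dual_vector_apply_eq_zero (by omega) x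
  have hTu := apply_eq_zero_of_forall_bjOrth_imp hsym hx hTx hh hu hhu hhx
  obtain ⟨f, hfx, hfu, hrepr⟩ :=
    exists_eq_smul_add_smul_of_finrank_eq_two hdim (by rintro rfl; simp at hx) hhx hhu
  have hTf : T = f.smulRight (T x) := by
    ext v
    conv_lhs => rw [hrepr v]
    simp [hTu]
  have hf : ‖f‖ = 1 := by
    have := congr(‖$hTf‖)
    rw [ContinuousLinearMap.norm_smulRight_apply, hTx] at this
    exact (mul_eq_right₀ (norm_ne_zero_iff.2 hT)).1 this.symm
  obtain ⟨y, hy, hqy⟩ := exists_norm_eq_one_bjOrth (by omega) (T x)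
  obtain ⟨A, hAx, hAT⟩ : ∃ A : X →L[ℝ] X, A x = y ∧ ¬ BJOrth A T := by
    by_cases hyq : BJOrth y (T x)
    · rw [hTf]
      exact exists_apply_eq_not_bjOrth_smulRight hf.le hh.le hx hu hfx hfu hhx hhu hy hq hyq
    · exact exists_apply_eq_not_bjOrth hx hyq
  exact hAT (hsym A (bjOrth_of_bjOrth_apply hx.le hTx (hAx ▸ hqy)))
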